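/- Let Σ⁺ be a Sasaki–Einstein 5-manifold with contact form η, θ a HYM connection 1-form on a circle bundle over C(Σ⁺), and φ_BC = θ∧ω_C + Re Ω_C the model G₂-structure on BC(Σ⁺). Then the corrected 3-form φ'_BC = θ∧ω_C + Re Ω_C − (1/2) r² η∧dθ is closed, and the correction term φ'_BC − φ_BC lies in Ω³₂₇ with respect to φ_BC, i.e. (φ'_BC − φ_BC) ∧ φ_BC = 0 = (φ'_BC − φ_BC) ∧ ψ_BC, where ψ_BC = −θ∧Im Ω_C + (1/2)ω_C². -/

import Mathlib

/-!
Closedness of `φ'_BC`: its `θ`-free part is `−r³ η∧ω₃ − ½r² η∧τ`, and both `η∧ω₃` and `η∧τ` are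
closed on `Σ⁺` by the Leibniz rule, because `dη = 2ω₁` while `ω₁∧ω₃ = 0`, `ω₁∧τ = 0` (HYM),
`η∧dω₃ = 3 η∧η∧ω₂ = 0` and `dτ = 0`. The remaining components of `dφ'_BC` match because
`dη = 2ω₁` (so `ω₁` is closed and `∂_r(r²ω₁) = r dη`) and `dω₂ = −3 η∧ω₃`.

Type `27`: every component of `(η∧τ)∧φ_BC` and `(η∧τ)∧ψ_BC` either contains `η∧η`, or contains
`τ∧ω_i`, which vanishes since `θ` is HYM, or has degree at least `6` on the `5`-manifold `Σ⁺`.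
-/

section FormCalculus

variable {L1 L2 L3 L4 : Type*}
  [AddCommGroup L1] [Module ℝ L1] [AddCommGroup L2] [Module ℝ L2]
  [AddCommGroup L3] [Module ℝ L3] [AddCommGroup L4] [Module ℝ L4]

theorem closed_of_eq_smul_exact {d₁ : L1 →ₗ[ℝ] L2} {d₂ : L2 →ₗ[ℝ] L3}
    (hdd : ∀ a, d₂ (d₁ a) = 0) {a : L1} {ω : L2} {c : ℝ} (hc : c ≠ 0) (h : d₁ a = c • ω) :
    d₂ ω = 0 := by
  have hc_dω : c • d₂ ω = 0 := by rw [← map_smul, ← h, hdd]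
  exact (smul_eq_zero.mp hc_dω).resolve_left hc

theorem d_wedge_eq_zero {d₁ : L1 →ₗ[ℝ] L2} {d₂ : L2 →ₗ[ℝ] L3} {d₃ : L3 →ₗ[ℝ] L4}
    {w12 : L1 →ₗ[ℝ] L2 →ₗ[ℝ] L3} {w22 : L2 →ₗ[ℝ] L2 →ₗ[ℝ] L4}
    {w13 : L1 →ₗ[ℝ] L3 →ₗ[ℝ] L4}
    (hLeib : ∀ a t, d₃ (w12 a t) = w22 (d₁ a) t - w13 a (d₂ t))
    {a : L1} {ω σ : L2} {c : ℝ} (hda : d₁ a = c • ω) (hωσ : w22 ω σ = 0)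
    (haσ : w13 a (d₂ σ) = 0) :
    d₃ (w12 a σ) = 0 := by
  rw [hLeib, hda, map_smul, LinearMap.smul_apply, hωσ, haσ, smul_zero, sub_zero]

end FormCalculus

theorem alc_g2_model_closed_correction_type27
    {L1 L2 L3 L4 L5 L6 L7 : Type*}
    [NormedAddCommGroup L1] [NormedSpace ℝ L1]
    [NormedAddCommGroup L2] [NormedSpace ℝ L2]
    [NormedAddCommGroup L3] [NormedSpace ℝ L3]
    [NormedAddCommGroup L4] [NormedSpace ℝ L4]
    [AddCommGroup L5] [Module ℝ L5]
    [AddCommGroup L6] [Module ℝ L6] [Subsingleton L6]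
    [AddCommGroup L7] [Module ℝ L7] [Subsingleton L7]
    (dS1 : L1 →ₗ[ℝ] L2) (dS2 : L2 →ₗ[ℝ] L3) (dS3 : L3 →ₗ[ℝ] L4)
    (w12 : L1 →ₗ[ℝ] L2 →ₗ[ℝ] L3) (w21 : L2 →ₗ[ℝ] L1 →ₗ[ℝ] L3)
    (w22 : L2 →ₗ[ℝ] L2 →ₗ[ℝ] L4) (w13 : L1 →ₗ[ℝ] L3 →ₗ[ℝ] L4)
    (w31 : L3 →ₗ[ℝ] L1 →ₗ[ℝ] L4) (w32 : L3 →ₗ[ℝ] L2 →ₗ[ℝ] L5)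
    (w33 : L3 →ₗ[ℝ] L3 →ₗ[ℝ] L6) (w34 : L3 →ₗ[ℝ] L4 →ₗ[ℝ] L7)
    (w14 : L1 →ₗ[ℝ] L4 →ₗ[ℝ] L5)
    (η : L1) (ω₁ ω₂ ω₃ τ : L2)                          -- τ = dθ
    -- Sasaki–Einstein equations and SU(2)-structure relations:
    (hSE₁ : dS1 η = (2 : ℝ) • ω₁)
    (hSE₂ : dS2 ω₂ = -(3 : ℝ) • w12 η ω₃)
    (hSE₃ : dS2 ω₃ = (3 : ℝ) • w12 η ω₂)
    (hdd : ∀ a, dS2 (dS1 a) = 0)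
    (hdτ : dS2 τ = 0)                                   -- dθ is closed
    (hω₁₃ : w22 ω₁ ω₃ = 0)
    -- exterior-algebra relations (graded commutativity, Leibniz, η∧η = 0, associativity):
    (hcomm21 : ∀ (s : L2) (a : L1), w21 s a = w12 a s)
    (hcomm22 : ∀ s t : L2, w22 s t = w22 t s)
    (hLeib : ∀ (a : L1) (t : L2), dS3 (w12 a t) = w22 (dS1 a) t - w13 a (dS2 t))
    (hηη : ∀ σ : L2, w13 η (w12 η σ) = 0)
    (hassoc1 : ∀ (a b : L1) (s : L2), w31 (w12 a s) b = w13 a (w21 s b))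
    (hassoc2 : ∀ (a : L1) (s t : L2), w32 (w12 a s) t = w14 a (w22 s t))
    -- θ is Hermitian Yang–Mills:
    (hHYM₁ : w22 τ ω₁ = 0) (hHYM₂ : w22 τ ω₂ = 0) (hHYM₃ : w22 τ ω₃ = 0) :
    -- (1) dφ'_BC = 0, componentwise:
    ((∀ r : ℝ, 0 < r →
        HasDerivAt (fun s : ℝ => (s ^ 2 : ℝ) • ω₁) (-(dS1 ((-r : ℝ) • η))) r) ∧
     (∀ r : ℝ, 0 < r →
        HasDerivAt (fun s : ℝ => (-(s ^ 3) : ℝ) • w12 η ω₃ + (-(s ^ 2) / 2 : ℝ) • w12 η τ)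
          (w21 τ ((-r : ℝ) • η) + dS2 ((r ^ 2 : ℝ) • ω₂)) r) ∧
     (∀ r : ℝ, 0 < r → dS2 ((r ^ 2 : ℝ) • ω₁) = 0) ∧
     (∀ r : ℝ, 0 < r →
        w22 τ ((r ^ 2 : ℝ) • ω₁)
          + dS3 ((-(r ^ 3) : ℝ) • w12 η ω₃ + (-(r ^ 2) / 2 : ℝ) • w12 η τ) = 0)) ∧
    -- (2) (φ'_BC − φ_BC) ∧ φ_BC = 0 and (φ'_BC − φ_BC) ∧ ψ_BC = 0, componentwise
    --     (the correction being the multiple −½r² of η∧τ):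
    ((w31 (w12 η τ) η = 0 ∧ w32 (w12 η τ) ω₂ = 0 ∧ w32 (w12 η τ) ω₁ = 0 ∧
        w33 (w12 η τ) (w12 η ω₃) = 0) ∧
     (w32 (w12 η τ) ω₃ = 0 ∧ w33 (w12 η τ) (w12 η ω₁) = 0 ∧
        w33 (w12 η τ) (w12 η ω₂) = 0 ∧ w34 (w12 η τ) (w22 ω₁ ω₁) = 0)) := by
  have hdω₁ : dS2 ω₁ = 0 := closed_of_eq_smul_exact hdd two_ne_zero hSE₁
  have hω₁τ : w22 ω₁ τ = 0 := by rw [hcomm22, hHYM₁]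
  have hdηω₃ : dS3 (w12 η ω₃) = 0 :=
    d_wedge_eq_zero hLeib hSE₁ hω₁₃ (by rw [hSE₃, map_smul, hηη, smul_zero])
  have hdητ : dS3 (w12 η τ) = 0 := d_wedge_eq_zero hLeib hSE₁ hω₁τ (by rw [hdτ, map_zero])
  have hητ_wedge : ∀ σ, w22 τ σ = 0 → w32 (w12 η τ) σ = 0 := fun σ h => by
    rw [hassoc2, h, map_zero]
  refine ⟨⟨fun r _ => ?_, fun r _ => ?_, fun r _ => ?_, fun r _ => ?_⟩,
    ⟨?_, hητ_wedge ω₂ hHYM₂, hητ_wedge ω₁ hHYM₁, Subsingleton.elim _ 0⟩,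
    hητ_wedge ω₃ hHYM₃, Subsingleton.elim _ 0, Subsingleton.elim _ 0, Subsingleton.elim _ 0⟩
  · refine ((hasDerivAt_pow 2 r).smul_const ω₁).congr_deriv ?_
    rw [map_smul, hSE₁]
    push_cast
    module
  · refine (((hasDerivAt_pow 3 r).neg.smul_const (w12 η ω₃)).add
      (((hasDerivAt_pow 2 r).neg.div_const 2).smul_const (w12 η τ))).congr_deriv ?_
    rw [hcomm21, map_smul, LinearMap.smul_apply, map_smul, hSE₂]
    push_cast
    module
  · rw [map_smul, hdω₁, smul_zero]
  · rw [map_smul, hHYM₁, map_add, map_smul, map_smul, hdηω₃, hdητ]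
    simp only [smul_zero, add_zero]
  · rw [hassoc1, hcomm21, hηη]
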